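/- arXiv:1303.0014 — 3 statements merged into one kernel-verified Lean document; each statement's English description precedes it below -/
import Mathlib

section
/- Let D ⊂ ℂⁿ be a convex tube domain. Then there exist k ∈ {0,…,n}, a convex tube domain G ⊂ Hᵏ (where H = {w ∈ ℂ : Re w < 0}), and a complex affine isomorphism Φ of ℂⁿ with Φ(ℝⁿ) = ℝⁿ such that Φ(D) = G × ℂ^{n−k}. Moreover, a holomorphic map φ : 𝔻 → D is a complex geodesic for D if and only if (Φ₁,…,Φ_k) ∘ φ is a complex geodesic for G. -/
open MeasureTheory Complex Metric Set Filter ComplexConjugate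

noncomputable section

instance : Fact (0 < 2 * Real.pi) := ⟨by positivity⟩

/-- The parametrization `AddCircle (2π) → 𝕋 ⊂ ℂ`, `θ ↦ exp(iθ)`. -/
noncomputable def tCoe : AddCircle (2 * Real.pi) → ℂ :=
  (periodic_circleMap 0 1).lift

/-- Integral of a complex-valued function against a (finite real) signed measure. -/
noncomputable def sIntC {X : Type*} [MeasurableSpace X] (ν : MeasureTheory.SignedMeasure X)
    (f : X → ℂ) : ℂ :=
  (∫ x, f x ∂ν.toJordanDecomposition.posPart) - ∫ x, f x ∂ν.toJordanDecomposition.negPart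

/-- Integral of a real-valued function against a (finite real) signed measure. -/
noncomputable def sIntR {X : Type*} [MeasurableSpace X] (ν : MeasureTheory.SignedMeasure X)
    (f : X → ℝ) : ℝ :=
  (∫ x, f x ∂ν.toJordanDecomposition.posPart) - ∫ x, f x ∂ν.toJordanDecomposition.negPart

/-- `μ = (μ₁,…,μₙ)` is the boundary measure of the holomorphic map `φ : 𝔻 → ℂⁿ`, i.e.
`φ_j(λ) = (1/2π) ∫_𝕋 (ζ+λ)/(ζ-λ) dμ_j(ζ) + i Im φ_j(0)` for `λ ∈ 𝔻`. -/
def IsBoundaryMeasure {n : ℕ} (φ : ℂ → Fin n → ℂ)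
    (μ : Fin n → MeasureTheory.SignedMeasure (AddCircle (2 * Real.pi))) : Prop :=
  ∀ j, ∀ lam ∈ ball (0 : ℂ) 1,
    φ lam j = (1 / (2 * Real.pi) : ℂ) *
        sIntC (μ j) (fun θ => (tCoe θ + lam) / (tCoe θ - lam)) + (φ 0 j).im * Complex.I

/-- `φ : 𝔻 → D` is a complex geodesic of `D`: it is holomorphic, maps `𝔻` into `D`, and
admits a holomorphic left inverse `f : D → 𝔻`. -/
def IsComplexGeodesic {E : Type*} [NormedAddCommGroup E] [NormedSpace ℂ E]
    (D : Set E) (φ : ℂ → E) : Prop :=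
  DifferentiableOn ℂ φ (ball 0 1) ∧ MapsTo φ (ball 0 1) D ∧
    ∃ f : E → ℂ, DifferentiableOn ℂ f D ∧ MapsTo f D (ball 0 1) ∧
      ∀ lam ∈ ball (0 : ℂ) 1, f (φ lam) = lam

/-- The vector `λ̄h(λ) = b + 2Re(aλ̄) ∈ ℝⁿ`, for `h(λ) = āλ² + bλ + a` and `λ = tCoe θ ∈ 𝕋`. -/
def hCirc {n : ℕ} (a : Fin n → ℂ) (b : Fin n → ℝ) (θ : AddCircle (2 * Real.pi)) :
    Fin n → ℝ :=
  fun j => b j + 2 * (a j * conj (tCoe θ)).re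

/-- The map `h(λ) = āλ² + bλ + a`. -/
def hPoly {n : ℕ} (a : Fin n → ℂ) (b : Fin n → ℝ) (lam : ℂ) : Fin n → ℂ :=
  fun j => conj (a j) * lam ^ 2 + (b j : ℂ) * lam + a j

/-- For `z ∈ ℂⁿ`, the real measure `λ̄h(λ) • (Re z dL(λ) − dμ(λ))` on `𝕋` is negative:
its value `Σ_j ∫_E (b_j + 2Re(a_jλ̄)) (Re z_j dL − dμ_j)` on every Borel set `E` is `≤ 0`. -/
def NegMeasureCond {n : ℕ} (μ : Fin n → MeasureTheory.SignedMeasure (AddCircle (2 * Real.pi)))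
    (a : Fin n → ℂ) (b : Fin n → ℝ) (z : Fin n → ℂ) : Prop :=
  ∀ E : Set (AddCircle (2 * Real.pi)), MeasurableSet E →
    (∑ j, ((z j).re * (∫ θ in E, hCirc a b θ j) -
      sIntR (μ j) (E.indicator fun θ => hCirc a b θ j))) ≤ 0

/-- Condition (i): for a.e. `λ ∈ 𝕋` the radial limit `φ*(λ)` exists and
`Re[λ̄h(λ) • (z − φ*(λ))] < 0` for all `z ∈ D`. -/
def RadialCond {n : ℕ} (D : Set (Fin n → ℂ)) (φ : ℂ → Fin n → ℂ)
    (a : Fin n → ℂ) (b : Fin n → ℝ) : Prop :=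
  ∀ᵐ θ : AddCircle (2 * Real.pi), ∃ w : Fin n → ℂ,
    Tendsto (fun r : ℝ => φ ((r : ℂ) * tCoe θ)) (nhdsWithin 1 (Iio 1)) (nhds w) ∧
    ∀ z ∈ D, (∑ j, (hCirc a b θ j : ℂ) * (z j - w j)).re < 0

/-- Condition (ii): `Re[h(λ) • (φ(0) − φ(λ))/λ] < 0` for every `λ ∈ 𝔻 ∖ {0}`. -/
def InnerCond {n : ℕ} (φ : ℂ → Fin n → ℂ) (a : Fin n → ℂ) (b : Fin n → ℝ) : Prop :=
  ∀ lam ∈ ball (0 : ℂ) 1 \ {0},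
    (∑ j, hPoly a b lam j * ((φ 0 j - φ lam j) / lam)).re < 0

/-- `D ⊂ ℂⁿ` is the convex tube domain with (convex, open, nonempty) base `Ω ⊂ ℝⁿ`,
i.e. `D = Ω + iℝⁿ`. -/
def IsConvexTube {n : ℕ} (D : Set (Fin n → ℂ)) (Ω : Set (Fin n → ℝ)) : Prop :=
  Convex ℝ Ω ∧ IsOpen Ω ∧ Ω.Nonempty ∧ D = {z | (fun j => (z j).re) ∈ Ω}

/-- The base `Ω` contains no real affine line (equivalently, the tube over `Ω` is taut). -/
def NoLine {n : ℕ} (Ω : Set (Fin n → ℝ)) : Prop :=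
  ∀ x v : Fin n → ℝ, v ≠ 0 → ¬ ∀ t : ℝ, x + t • v ∈ Ω

end

/-! The linear functionals bounded above on the base `Ω` span a space with a basis `u₁, …, u_k`
of such functionals. By Hahn–Banach, `Ω` is invariant under translation by their common kernel,
so in real affine coordinates whose first `k` entries are `uᵢ - bᵢ - 1`, with `bᵢ` an upper bound
of `uᵢ` on `Ω`, the base becomes `ΩG × ℝⁿ⁻ᵏ` with `ΩG` in the negative orthant; the
complexification of this change of coordinates is `Φ`. Complex geodesics are invariant under
biholomorphisms, and on a cylinder `π⁻¹(G)` a holomorphic map to `𝔻` is constant on the fibres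
of `π` by Liouville's theorem (the fibres are affine subspaces), so any left inverse of `φ`
factors through `G`. -/

open Module Matrix

theorem Convex.add_mem_of_forall_bddAbove_imp_eq_zero {E : Type*} [AddCommGroup E] [Module ℝ E]
    [TopologicalSpace E] [IsTopologicalAddGroup E] [ContinuousSMul ℝ E] [LocallyConvexSpace ℝ E]
    {Ω : Set E} (hconv : Convex ℝ Ω) (hopen : IsOpen Ω) {w : E}
    (hw : ∀ f : StrongDual ℝ E, BddAbove (f '' Ω) → f w = 0) {x : E} (hx : x ∈ Ω) :
    x + w ∈ Ω := by
  by_contra hxw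
  obtain ⟨f, hf⟩ := geometric_hahn_banach_open_point hconv hopen hxw
  have hfw : f w = 0 := hw f ⟨f (x + w), forall_mem_image.2 fun y hy => (hf y hy).le⟩
  simpa [hfw] using hf x hx

theorem exists_linearEquiv_apply_castLE {K V : Type*} [Field K] [AddCommGroup V] [Module K V]
    [FiniteDimensional K V] {n k : ℕ} (hn : finrank K V = n) (hk : k ≤ n)
    {u : Fin k → Dual K V} (hu : LinearIndependent K u) :
    ∃ L : V ≃ₗ[K] (Fin n → K), ∀ x i, L x (Fin.castLE hk i) = u i x := by
  classical
  set b := Basis.sumExtend hu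
  have hb : ∀ i, b (Sum.inl i) = u i := fun i => by
    simp only [b, Basis.sumExtend, Basis.reindex_apply, Basis.coe_extend]
    rfl
  have := (Module.Finite.finite_basis b).of_injective _ Sum.inr_injective
  let := Fintype.ofFinite (Basis.sumExtendIndex hu)
  have hcard : k + Fintype.card (Basis.sumExtendIndex hu) = n := by
    simpa [Subspace.dual_finrank_eq, hn] using (Module.finrank_eq_card_basis b).symm
  let e : Fin k ⊕ Basis.sumExtendIndex hu ≃ Fin n :=
    (Equiv.sumCongr (Equiv.refl _) (Fintype.equivFin _)).trans
      (finSumFinEquiv.trans (finCongr hcard))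
  have he : ∀ i, e (Sum.inl i) = Fin.castLE hk i := fun i => Fin.ext (by simp [e])
  refine ⟨(evalEquiv K V).trans (b.reindex e).dualBasis.equivFun, fun x i => ?_⟩
  simp [← he, hb]

theorem Convex.mem_of_forall_apply_eq {V : Type*} [NormedAddCommGroup V] [NormedSpace ℝ V]
    [FiniteDimensional ℝ V] {Ω : Set V} (hconv : Convex ℝ Ω) (hopen : IsOpen Ω)
    {s : Set (Dual ℝ V)} (hs : {f : Dual ℝ V | BddAbove (f '' Ω)} ⊆ Submodule.span ℝ s)
    {x₀ x : V} (hx₀ : x₀ ∈ Ω) (hx : ∀ f ∈ s, f x = f x₀) : x ∈ Ω := by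
  have hker : Submodule.span ℝ s ≤ LinearMap.ker (Dual.eval ℝ V (x - x₀)) :=
    Submodule.span_le.2 fun f hf => by simp [hx f hf]
  have hbdd (f : StrongDual ℝ V) (hf : BddAbove (f '' Ω)) : f (x - x₀) = 0 :=
    hker (hs (a := (f : Dual ℝ V)) hf)
  simpa using hconv.add_mem_of_forall_bddAbove_imp_eq_zero hopen hbdd hx₀

theorem Convex.exists_cylinder_decomposition {n : ℕ} {Ω : Set (Fin n → ℝ)} (hconv : Convex ℝ Ω)
    (hopen : IsOpen Ω) (hne : Ω.Nonempty) :
    ∃ (k : ℕ) (hk : k ≤ n) (M : Matrix (Fin n) (Fin n) ℝ) (d : Fin n → ℝ)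
      (ΩG : Set (Fin k → ℝ)), IsUnit M.det ∧ Convex ℝ ΩG ∧ IsOpen ΩG ∧ ΩG.Nonempty ∧
      (∀ y ∈ ΩG, ∀ i, y i < 0) ∧
      ∀ x, x ∈ Ω ↔ (fun i => (M *ᵥ x + d) (Fin.castLE hk i)) ∈ ΩG := by
  classical
  obtain ⟨s, hsU, hspan, hind⟩ :=
    exists_linearIndependent ℝ {f : Dual ℝ (Fin n → ℝ) | BddAbove (f '' Ω)}
  have := hind.setFinite.fintype
  let e := (Fintype.equivFin s).symm
  let u : Fin (Fintype.card s) → Dual ℝ (Fin n → ℝ) := fun i => e i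
  have hu : LinearIndependent ℝ u := hind.comp e e.injective
  have hk : Fintype.card s ≤ n := by simpa using hu.fintype_card_le_finrank
  obtain ⟨L, hL⟩ := exists_linearEquiv_apply_castLE (finrank_fin_fun ℝ) hk hu
  have hextend := (Fin.castLE_injective hk).extend_apply (γ := ℝ)
  choose b hb using fun i => hsU (e i).2
  let d' : Fin (Fintype.card s) → ℝ := fun i => -(b i + 1)
  let d := Function.extend (Fin.castLE hk) d' 0
  let p := LinearMap.pi u
  have hp : Function.Surjective p := fun y =>
    ⟨L.symm (Function.extend (Fin.castLE hk) y 0), funext fun i => by simp [p, u, ← hL, hextend]⟩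
  have hcoord (x : Fin n → ℝ) :
      (fun i => (LinearMap.toMatrix' L.toLinearMap *ᵥ x + d) (Fin.castLE hk i)) = d' + p x :=
    funext fun i => by simp [LinearMap.toMatrix'_mulVec, hL, d, hextend, p, add_comm]
  refine ⟨_, hk, LinearMap.toMatrix' L.toLinearMap, d, (d' + ·) '' (p '' Ω),
    LinearMap.det_toMatrix' L.toLinearMap ▸ L.isUnit_det', (hconv.linear_image p).translate d',
    isOpenMap_add_left d' _ (p.isOpenMap_of_finiteDimensional hp _ hopen), (hne.image p).image _,
    ?_, fun x => ?_⟩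
  · rintro _ ⟨_, ⟨x, hx, rfl⟩, rfl⟩ i
    have := hb i (mem_image_of_mem _ hx)
    simp only [Pi.add_apply, d', p, LinearMap.pi_apply]
    linarith
  · rw [hcoord]
    refine ⟨fun hx => mem_image_of_mem _ (mem_image_of_mem _ hx), ?_⟩
    rintro ⟨_, ⟨x₀, hx₀, rfl⟩, hx₀x⟩
    refine hconv.mem_of_forall_apply_eq hopen (hspan.symm ▸ Submodule.subset_span) hx₀
      fun f hf => ?_
    simpa [p, u] using (congrFun (add_left_cancel hx₀x) (e.symm ⟨f, hf⟩)).symm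

section ComplexGeodesic

variable {E F : Type*} [NormedAddCommGroup E] [NormedSpace ℂ E]
  [NormedAddCommGroup F] [NormedSpace ℂ F]

theorem isComplexGeodesic_image_iff {D : Set E} {Φ : E → F} {Ψ : F → E}
    (hΦ : DifferentiableOn ℂ Φ D) (hΨ : DifferentiableOn ℂ Ψ (Φ '' D))
    (hΨΦ : Function.LeftInverse Ψ Φ) {φ : ℂ → E} :
    IsComplexGeodesic D φ ↔ IsComplexGeodesic (Φ '' D) (Φ ∘ φ) := by
  have hΨD : MapsTo Ψ (Φ '' D) D := mapsTo_iff_image_subset.2 (hΨΦ.image_image D).subset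
  constructor
  · rintro ⟨hφ, hφD, f, hf, hfD, hfφ⟩
    refine ⟨hΦ.comp hφ hφD, (mapsTo_image Φ D).comp hφD, f ∘ Ψ, hf.comp hΨ hΨD, hfD.comp hΨD,
      fun lam hlam => ?_⟩
    simp only [Function.comp_apply, hΨΦ _, hfφ lam hlam]
  · rintro ⟨hΦφ, hΦφD, g, hg, hgD, hgΦφ⟩
    have hφ : Ψ ∘ Φ ∘ φ = φ := funext fun lam => hΨΦ _
    exact ⟨hφ ▸ hΨ.comp hΦφ hΦφD, hφ ▸ hΨD.comp hΦφD, g ∘ Φ, hg.comp hΦ (mapsTo_image Φ D),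
      hgD.comp (mapsTo_image Φ D), hgΦφ⟩

theorem DifferentiableOn.apply_eq_apply_of_bounded_of_map_eq (π : E →L[ℂ] F) {G : Set F}
    {f : E → ℂ} (hf : DifferentiableOn ℂ f (π ⁻¹' G))
    (hfb : Bornology.IsBounded (f '' (π ⁻¹' G))) {z w : E} (hz : π z ∈ G) (hzw : π z = π w) :
    f z = f w := by
  set line : ℂ → E := fun t => z + t • (w - z)
  have hmaps : MapsTo line univ (π ⁻¹' G) := fun t _ => by simpa [line, hzw] using hz
  have hdiff : Differentiable ℂ (f ∘ line) := by
    rw [← differentiableOn_univ]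
    exact hf.comp (by fun_prop) hmaps
  have hbdd : Bornology.IsBounded (range (f ∘ line)) :=
    hfb.subset (by rintro _ ⟨t, rfl⟩; exact mem_image_of_mem f (hmaps (mem_univ t)))
  simpa [line] using hdiff.apply_eq_apply_of_bounded hbdd 0 1

theorem isComplexGeodesic_preimage_iff [FiniteDimensional ℂ F] (π : E →L[ℂ] F)
    (hπ : Function.Surjective π) {G : Set F} {φ : ℂ → E}
    (hφ : DifferentiableOn ℂ φ (ball 0 1)) (hφG : MapsTo φ (ball 0 1) (π ⁻¹' G)) :
    IsComplexGeodesic (π ⁻¹' G) φ ↔ IsComplexGeodesic G (π ∘ φ) := by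
  constructor
  · rintro ⟨-, -, f, hf, hfD, hfφ⟩
    obtain ⟨σ, hσ⟩ := π.exists_rightInverse_of_surjective (LinearMap.range_eq_top.2 hπ)
    have hπσ (w : F) : π (σ w) = w := DFunLike.congr_fun hσ w
    have hσG : MapsTo σ G (π ⁻¹' G) := fun w hw => by simpa [hπσ w] using hw
    refine ⟨π.differentiable.comp_differentiableOn hφ, hφG, f ∘ σ, hf.comp σ.differentiableOn hσG,
      hfD.comp hσG, fun lam hlam => ?_⟩
    have hfib := hf.apply_eq_apply_of_bounded_of_map_eq π (isBounded_ball.subset hfD.image_subset)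
      (hφG hlam) (hπσ (π (φ lam))).symm
    simp only [Function.comp_apply, ← hfib, hfφ lam hlam]
  · rintro ⟨-, -, g, hg, hgG, hgφ⟩
    exact ⟨hφ, hφG, g ∘ π, hg.comp π.differentiableOn fun z hz => hz, hgG.comp fun z hz => hz,
      hgφ⟩

end ComplexGeodesic

namespace Matrix

variable {ι : Type*} [Fintype ι]

def complexAffine (M : Matrix ι ι ℝ) (d : ι → ℝ) (z : ι → ℂ) : ι → ℂ :=
  M.map ofRealHom *ᵥ z + fun j => (d j : ℂ)

variable (M : Matrix ι ι ℝ) (d : ι → ℝ)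

theorem re_complexAffine (z : ι → ℂ) :
    (fun j => (M.complexAffine d z j).re) = M *ᵥ (fun j => (z j).re) + d := by
  ext j
  simp [complexAffine, mulVec, dotProduct, re_sum]

theorem im_complexAffine (z : ι → ℂ) :
    (fun j => (M.complexAffine d z j).im) = M *ᵥ fun j => (z j).im := by
  ext j
  simp [complexAffine, mulVec, dotProduct, im_sum]

theorem complexAffine_complexAffine (N : Matrix ι ι ℝ) (e : ι → ℝ) (z : ι → ℂ) :
    M.complexAffine d (N.complexAffine e z) = (M * N).complexAffine (M *ᵥ e + d) z := by
  funext j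
  simp only [complexAffine, mulVec_add, mulVec_mulVec, ← Matrix.map_mul, Pi.add_apply, add_assoc,
    ofReal_add]
  congr 2
  exact (RingHom.map_mulVec ofRealHom M e j).symm

theorem differentiable_complexAffine : Differentiable ℂ (M.complexAffine d) :=
  (LinearMap.toContinuousLinearMap (mulVecLin (M.map ofRealHom))).differentiable.add_const _

variable [DecidableEq ι] {M}

theorem leftInverse_complexAffine (hM : IsUnit M.det) :
    Function.LeftInverse (M⁻¹.complexAffine (-(M⁻¹ *ᵥ d))) (M.complexAffine d) := fun z => by
  rw [complexAffine_complexAffine, nonsing_inv_mul _ hM, add_neg_cancel]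
  simp [complexAffine, Pi.zero_def]

theorem rightInverse_complexAffine (hM : IsUnit M.det) :
    Function.RightInverse (M⁻¹.complexAffine (-(M⁻¹ *ᵥ d))) (M.complexAffine d) := fun z => by
  rw [complexAffine_complexAffine, mul_nonsing_inv _ hM, mulVec_neg, mulVec_mulVec,
    mul_nonsing_inv _ hM, one_mulVec, neg_add_cancel]
  simp [complexAffine, Pi.zero_def]

theorem image_complexAffine (hM : IsUnit M.det) (S : Set (ι → ℂ)) :
    M.complexAffine d '' S = M⁻¹.complexAffine (-(M⁻¹ *ᵥ d)) ⁻¹' S :=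
  congrFun (image_eq_preimage_of_inverse (leftInverse_complexAffine d hM)
    (rightInverse_complexAffine d hM)) S

theorem image_complexAffine_setOf_im_eq_zero (hM : IsUnit M.det) :
    M.complexAffine d '' {z | ∀ j, (z j).im = 0} = {z | ∀ j, (z j).im = 0} := by
  have hinj : Function.Injective (M⁻¹ *ᵥ ·) :=
    mulVec_injective_iff_isUnit.2 (isUnit_nonsing_inv_iff.2 ((isUnit_iff_isUnit_det M).2 hM))
  ext w
  simpa [image_complexAffine d hM, im_complexAffine, ← funext_iff, Pi.zero_def] using
    hinj.eq_iff' (mulVec_zero _)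

end Matrix

/-- Observation (decomposition of a convex tube domain): `Φ(D) = G × ℂ^{n-k}` with `G` a
convex tube in the polydomain `Hᵏ`, for some complex affine isomorphism `Φ` preserving
`ℝⁿ`; moreover `φ` is a complex geodesic for `D` iff `(Φ₁,…,Φ_k) ∘ φ` is one for `G`. -/
theorem convex_tube_decomposition {n : ℕ}
    (D : Set (Fin n → ℂ)) (Ω : Set (Fin n → ℝ)) (hTube : IsConvexTube D Ω) :
    ∃ (k : ℕ) (hk : k ≤ n) (T : Matrix (Fin n) (Fin n) ℂ) (c : Fin n → ℂ)
      (G : Set (Fin k → ℂ)) (ΩG : Set (Fin k → ℝ)),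
      IsUnit T.det ∧
      (fun z => T.mulVec z + c) '' {z : Fin n → ℂ | ∀ j, (z j).im = 0} =
        {z : Fin n → ℂ | ∀ j, (z j).im = 0} ∧
      IsConvexTube G ΩG ∧
      G ⊆ {w : Fin k → ℂ | ∀ i, (w i).re < 0} ∧
      (fun z => T.mulVec z + c) '' D =
        {z : Fin n → ℂ | (fun i : Fin k => z (Fin.castLE hk i)) ∈ G} ∧
      ∀ φ : ℂ → Fin n → ℂ, DifferentiableOn ℂ φ (ball 0 1) →
        MapsTo φ (ball 0 1) D →
        (IsComplexGeodesic D φ ↔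
          IsComplexGeodesic G
            (fun lam => fun i : Fin k => (T.mulVec (φ lam) + c) (Fin.castLE hk i))) := by
  obtain ⟨hconv, hopen, hne, rfl⟩ := hTube
  obtain ⟨k, hk, M, d, ΩG, hM, hconvG, hopenG, hneG, hnegG, hΩ⟩ :=
    hconv.exists_cylinder_decomposition hopen hne
  let π : (Fin n → ℂ) →L[ℂ] (Fin k → ℂ) :=
    ContinuousLinearMap.pi fun i => ContinuousLinearMap.proj (Fin.castLE hk i)
  set G := {w : Fin k → ℂ | (fun i => (w i).re) ∈ ΩG}
  have hD : M.complexAffine d '' {z | (fun j => (z j).re) ∈ Ω} = π ⁻¹' G := by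
    ext w
    simp [image_complexAffine d hM, re_complexAffine, G, π, hΩ, mulVec_add, mulVec_neg,
      mulVec_mulVec, mul_nonsing_inv _ hM]
  refine ⟨k, hk, M.map ofRealHom, fun j => d j, G, ΩG, RingHom.map_det ofRealHom M ▸ hM.map _,
    image_complexAffine_setOf_im_eq_zero d hM, ⟨hconvG, hopenG, hneG, rfl⟩,
    fun w hw i => hnegG _ hw i, hD, fun φ hφ hφD => ?_⟩
  rw [isComplexGeodesic_image_iff (M.differentiable_complexAffine d).differentiableOn
    (M⁻¹.differentiable_complexAffine _).differentiableOn (leftInverse_complexAffine d hM), hD]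
  exact isComplexGeodesic_preimage_iff π (Fin.castLE_injective hk).surjective_comp_right
    ((M.differentiable_complexAffine d).comp_differentiableOn hφ)
    (hD ▸ (mapsTo_image _ _).comp hφD)
end

section
/- Let a ∈ ℂ and b ∈ ℝ satisfy |b| < 2|a|, set h(λ) = āλ² + bλ + a, and let c = −b/(2|a| + √(4|a|² − b²)). Then for every λ ∈ 𝔻: (1/2π) ∫_{{ζ ∈ 𝕋 : ζ̄h(ζ) > 0}} (ζ+λ)/(ζ−λ) dL(ζ) = τ(i T_c((ā/|a|)λ)), where τ(w) = −(i/π) log(i(1+w)/(1−w)) with log the branch of the logarithm whose argument lies in [0, 2π), and T_c(w) = (w − c)/(1 − c̄ w). -/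
open MeasureTheory Complex Metric Set Filter ComplexConjugate

/-- The branch of the complex logarithm with argument in `[0, 2π)`. -/
noncomputable def log2pi (w : ℂ) : ℂ :=
  Real.log (‖w‖) +
    (if Complex.arg w < 0 then Complex.arg w + 2 * Real.pi else Complex.arg w) * Complex.I

/-- The biholomorphism `τ : 𝔻 → S` onto the strip, `τ(w) = -(i/π) log(i(1+w)/(1-w))`. -/
noncomputable def tau (w : ℂ) : ℂ :=
  -(Complex.I / Real.pi) * log2pi (Complex.I * (1 + w) / (1 - w))

/-!
Write `a = ‖a‖ e^{iα}`. On the circle `ζ̄h(ζ) = b + 2‖a‖ cos(θ - α)`, so the domain of integration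
is the arc `|θ - α| < θ₀`, `θ₀ = arccos(-b / 2‖a‖)`, and the Herglotz kernel has the explicit
primitive `θ - 2i log(1 - λe^{-iθ})`. With `v = (ā/‖a‖)λ` the left side is therefore
`θ₀/π - (i/π)(log(1 - ve^{-iθ₀}) - log(1 - ve^{iθ₀}))`.
On the right, `c = cos θ₀ / (1 + sin θ₀)` is the half-angle parameter with
`(c + i)/(1 + ic) = e^{iθ₀}`, which turns `i(1 + iT_c v)/(1 - iT_c v)` into the disc automorphism
`(e^{iθ₀} - v)/(1 - e^{iθ₀}v)`. It maps `𝔻` into the upper half-plane, where the `[0, 2π)` branch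
is the principal one, and its logarithm is `log(1 - ve^{-iθ₀}) - log(1 - ve^{iθ₀}) + iθ₀`.
-/

open Real in
lemma Real.lt_cos_iff_abs_lt_arccos {k y : ℝ} (hk : -1 ≤ k) (hy : |y| ≤ π) :
    k < cos y ↔ |y| < arccos k := by
  rcases le_or_gt k 1 with hk1 | hk1
  · conv_lhs => rw [← cos_abs, ← cos_arccos hk hk1]
    exact strictAntiOn_cos.lt_iff_gt ⟨arccos_nonneg k, arccos_le_pi k⟩ ⟨abs_nonneg y, hy⟩
  · rw [arccos_eq_zero.mpr hk1.le]
    exact iff_of_false (by linarith [cos_le_one y]) (not_lt.mpr (abs_nonneg y))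

lemma AddCircle.setIntegral_eq_integral_preimage_inter_Ioc {T : ℝ} [Fact (0 < T)]
    {E : Type*} [NormedAddCommGroup E] [NormedSpace ℝ E] (f : AddCircle T → E)
    {S : Set (AddCircle T)} (hS : MeasurableSet S) (t : ℝ) :
    ∫ θ in S, f θ = ∫ x in ((↑) ⁻¹' S) ∩ Ioc t (t + T), f x := by
  have hpre : MeasurableSet (((↑) : ℝ → AddCircle T) ⁻¹' S) := AddCircle.measurable_mk' hS
  rw [← integral_indicator hS, ← AddCircle.integral_preimage T t,
    ← Measure.restrict_restrict hpre, ← integral_indicator hpre]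
  rfl

lemma tCoe_coe (x : ℝ) : tCoe x = exp (x * I) := by
  simp [tCoe, circleMap]

@[fun_prop]
lemma continuous_tCoe : Continuous tCoe :=
  continuous_coinduced_dom.mpr (continuous_circleMap 0 1)

lemma one_sub_mem_slitPlane {w : ℂ} (hw : ‖w‖ < 1) : 1 - w ∈ slitPlane := by
  simpa [sub_eq_add_neg] using mem_slitPlane_of_norm_lt_one (z := -w) (by simpa using hw)

lemma one_sub_mul_ne_zero {z w : ℂ} (hz : ‖z‖ ≤ 1) (hw : ‖w‖ < 1) : 1 - z * w ≠ 0 :=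
  slitPlane_ne_zero (one_sub_mem_slitPlane (by
    rw [norm_mul]; nlinarith [norm_nonneg z, norm_nonneg w]))

lemma exp_ofReal_mul_I_sub_ne_zero {lam : ℂ} (hlam : ‖lam‖ < 1) (x : ℝ) :
    exp (x * I) - lam ≠ 0 := by
  intro h
  rw [sub_eq_zero] at h
  simp [← h, norm_exp_ofReal_mul_I] at hlam

lemma hasDerivAt_herglotz_primitive {lam : ℂ} (hlam : ‖lam‖ < 1) (x : ℝ) :
    HasDerivAt (fun y : ℝ => (y : ℂ) - 2 * I * log (1 - lam * exp (-(y * I))))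
      ((exp (x * I) + lam) / (exp (x * I) - lam)) x := by
  have hw : ‖lam * exp (-(x * I))‖ < 1 := by
    simpa [norm_mul, ← neg_mul, ← ofReal_neg, norm_exp_ofReal_mul_I] using hlam
  have hlog := ((((hasDerivAt_id (x : ℂ)).mul_const I).neg.cexp.const_mul lam).const_sub 1).clog
    (one_sub_mem_slitPlane hw)
  have hprim := ((hasDerivAt_id (x : ℂ)).sub (hlog.const_mul (2 * I))).comp_ofReal
  refine hprim.congr_deriv ?_
  have hne := exp_ofReal_mul_I_sub_ne_zero hlam x
  have he : exp (x * I) ≠ 0 := exp_ne_zero _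
  simp only [Pi.neg_apply, id, one_mul, exp_neg]
  generalize exp (x * I) = e at hne he ⊢
  field_simp
  linear_combination (-2 * lam) * I_sq

lemma integral_herglotz_kernel {lam : ℂ} (hlam : ‖lam‖ < 1) (s t : ℝ) :
    ∫ x in s..t, (exp (x * I) + lam) / (exp (x * I) - lam) =
      (t - s) - 2 * I * (log (1 - lam * exp (-(t * I))) - log (1 - lam * exp (-(s * I)))) := by
  have hcont : Continuous fun x : ℝ => (exp (x * I) + lam) / (exp (x * I) - lam) :=
    Continuous.div (by fun_prop) (by fun_prop) (exp_ofReal_mul_I_sub_ne_zero hlam)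
  rw [intervalIntegral.integral_eq_sub_of_hasDerivAt
    (fun x _ => hasDerivAt_herglotz_primitive hlam x) (hcont.intervalIntegrable s t)]
  ring

lemma conj_div_norm_eq_exp_neg_arg {a : ℂ} (ha : a ≠ 0) : conj a / ‖a‖ = exp (-(arg a * I)) := by
  rw [div_eq_iff (by simpa using ha)]
  conv_lhs => rw [← norm_mul_exp_arg_mul_I a]
  rw [map_mul, conj_ofReal, ← exp_conj, map_mul, conj_ofReal, conj_I, mul_neg, mul_comm]

lemma re_mul_conj_exp_ofReal_mul_I (a : ℂ) (x : ℝ) :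
    (a * conj (exp (x * I))).re = ‖a‖ * Real.cos (x - arg a) := by
  conv_lhs => rw [← norm_mul_exp_arg_mul_I a]
  rw [← exp_conj, map_mul, conj_ofReal, conj_I, mul_assoc, ← exp_add,
    show arg a * I + x * -I = ((arg a - x : ℝ) : ℂ) * I by push_cast; ring,
    re_ofReal_mul, exp_ofReal_mul_I_re, ← Real.cos_neg, neg_sub]

lemma preimage_setOf_pos_inter_Ioc {a : ℂ} {b : ℝ} (ha : a ≠ 0) (hb : b ≤ 2 * ‖a‖) :
    ((↑) : ℝ → AddCircle (2 * Real.pi)) ⁻¹' {θ | 0 < b + 2 * (a * conj (tCoe θ)).re} ∩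
        Ioc (arg a - Real.pi) (arg a - Real.pi + 2 * Real.pi) =
      Ioo (arg a - Real.arccos (-b / (2 * ‖a‖))) (arg a + Real.arccos (-b / (2 * ‖a‖))) := by
  have hr : 0 < 2 * ‖a‖ := by positivity
  have hk : -1 ≤ -b / (2 * ‖a‖) := by rw [le_div_iff₀ hr]; linarith
  have hpos_iff (y : ℝ) : 0 < b + 2 * (‖a‖ * Real.cos y) ↔ -b / (2 * ‖a‖) < Real.cos y := by
    rw [div_lt_iff₀ hr]
    constructor <;> intro <;> linarith
  have hθ := Real.arccos_le_pi (-b / (2 * ‖a‖))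
  ext x
  simp only [mem_inter_iff, mem_preimage, mem_ofPred_eq, tCoe_coe, re_mul_conj_exp_ofReal_mul_I,
    mem_Ioc, mem_Ioo]
  constructor
  · rintro ⟨hpos, h1, h2⟩
    have hy : |x - arg a| ≤ Real.pi := abs_le.mpr ⟨by linarith, by linarith⟩
    obtain ⟨h3, h4⟩ :=
      abs_lt.mp ((Real.lt_cos_iff_abs_lt_arccos hk hy).mp ((hpos_iff _).mp hpos))
    constructor <;> linarith
  · rintro ⟨h1, h2⟩
    have habs : |x - arg a| < Real.arccos (-b / (2 * ‖a‖)) := abs_lt.mpr ⟨by linarith, by linarith⟩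
    have hcos := (Real.lt_cos_iff_abs_lt_arccos hk (habs.le.trans hθ)).mpr habs
    exact ⟨(hpos_iff _).mpr hcos, by linarith, by linarith⟩

lemma setIntegral_herglotz_kernel_setOf_pos {a lam : ℂ} {b : ℝ} (ha : a ≠ 0) (hb : b ≤ 2 * ‖a‖)
    (hlam : ‖lam‖ < 1) {θ₀ : ℝ} (hθ₀ : θ₀ = Real.arccos (-b / (2 * ‖a‖))) :
    ∫ θ in {θ : AddCircle (2 * Real.pi) | 0 < b + 2 * (a * conj (tCoe θ)).re},
        (tCoe θ + lam) / (tCoe θ - lam) =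
      2 * θ₀ - 2 * I * (log (1 - conj a / ‖a‖ * lam * exp (-(θ₀ * I))) -
        log (1 - conj a / ‖a‖ * lam * exp (θ₀ * I))) := by
  have hS : MeasurableSet {θ : AddCircle (2 * Real.pi) | 0 < b + 2 * (a * conj (tCoe θ)).re} :=
    (isOpen_lt continuous_const (by fun_prop)).measurableSet
  have hθ : 0 ≤ θ₀ := hθ₀ ▸ Real.arccos_nonneg _
  rw [AddCircle.setIntegral_eq_integral_preimage_inter_Ioc _ hS (arg a - Real.pi),
    preimage_setOf_pos_inter_Ioc ha hb, ← hθ₀, ← integral_Ioc_eq_integral_Ioo,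
    ← intervalIntegral.integral_of_le (by linarith)]
  simp only [tCoe_coe]
  have hsplit (s : ℝ) :
      exp (-(((arg a + s : ℝ) : ℂ) * I)) = exp (-(arg a * I)) * exp (-(s * I)) := by
    rw [← Complex.exp_add]; push_cast; ring_nf
  rw [integral_herglotz_kernel hlam, conj_div_norm_eq_exp_neg_arg ha, sub_eq_add_neg (arg a),
    hsplit, hsplit]
  push_cast
  ring_nf

lemma neg_div_add_sqrt_eq_cos_div_one_add_sin {r b : ℝ} (hr : 0 < r) (hb : |b| ≤ 2 * r) :
    -b / (2 * r + √(4 * r ^ 2 - b ^ 2)) =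
      Real.cos (Real.arccos (-b / (2 * r))) / (1 + Real.sin (Real.arccos (-b / (2 * r)))) := by
  obtain ⟨hb₁, hb₂⟩ := abs_le.mp hb
  have hk₁ : -1 ≤ -b / (2 * r) := by rw [le_div_iff₀ (by positivity)]; linarith
  have hk₂ : -b / (2 * r) ≤ 1 := by rw [div_le_one (by positivity)]; linarith
  have hsqrt : √(4 * r ^ 2 - b ^ 2) = 2 * r * √(1 - (-b / (2 * r)) ^ 2) := by
    rw [show 4 * r ^ 2 - b ^ 2 = (2 * r) ^ 2 * (1 - (-b / (2 * r)) ^ 2) by field_simp; ring,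
      Real.sqrt_mul (sq_nonneg _), Real.sqrt_sq (by positivity)]
  rw [Real.cos_arccos hk₁ hk₂, Real.sin_arccos, hsqrt]
  have : 0 ≤ √(1 - (-b / (2 * r)) ^ 2) := Real.sqrt_nonneg _
  field_simp

lemma abs_cos_div_one_add_sin_le_one {θ : ℝ} (h : 0 ≤ Real.sin θ) :
    |Real.cos θ / (1 + Real.sin θ)| ≤ 1 := by
  have h₁ : 0 < 1 + Real.sin θ := by linarith
  rw [abs_div, abs_of_pos h₁, div_le_one h₁]
  linarith [Real.abs_cos_le_one θ]

lemma exp_mul_I_mul_one_add_I_mul {θ c : ℝ} (hθ : 0 ≤ Real.sin θ)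
    (hc : c = Real.cos θ / (1 + Real.sin θ)) : exp (θ * I) * (1 + I * c) = c + I := by
  have hc' : c * (1 + Real.sin θ) = Real.cos θ := by rw [hc]; field_simp
  rw [exp_mul_I, ← ofReal_cos, ← ofReal_sin]
  have hc'' : c * Real.cos θ = 1 - Real.sin θ := by
    refine mul_right_cancel₀ (by linarith : 1 + Real.sin θ ≠ 0) ?_
    linear_combination Real.cos θ * hc' + Real.sin_sq_add_cos_sq θ
  apply Complex.ext <;>
    simp only [add_re, add_im, mul_re, mul_im, ofReal_re, ofReal_im, I_re, I_im, one_re, one_im]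
  · linear_combination -hc'
  · linear_combination hc''

lemma I_mul_cayley_mobius {c q v : ℂ} (hq : q * (1 + I * c) = c + I) (hcv : 1 - c * v ≠ 0)
    (hqv : 1 - q * v ≠ 0) :
    I * (1 + I * ((v - c) / (1 - c * v))) / (1 - I * ((v - c) / (1 - c * v))) =
      (q - v) / (1 - q * v) := by
  have hIc : 1 + I * c ≠ 0 := by
    intro h
    rw [h, mul_zero, eq_comm, add_eq_zero_iff_eq_neg] at hq
    rw [hq] at h
    simp at h
  have hm : (v - c) / (1 - c * v) * (1 - c * v) = v - c := div_mul_cancel₀ _ hcv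
  have hden : (1 - I * ((v - c) / (1 - c * v))) * (1 - c * v) = (1 + I * c) * (1 - q * v) := by
    linear_combination (-I) * hm + v * hq
  have hnum : I * (1 + I * ((v - c) / (1 - c * v))) * (1 - c * v) = (1 + I * c) * (q - v) := by
    linear_combination I ^ 2 * hm - hq + (v - c) * I_sq
  have hden' : 1 - I * ((v - c) / (1 - c * v)) ≠ 0 := by
    intro h
    rw [h, zero_mul] at hden
    exact mul_ne_zero hIc hqv hden.symm
  rw [div_eq_div_iff hden' hqv, ← mul_right_inj' hcv]
  linear_combination (1 - q * v) * hnum - (q - v) * hden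

lemma im_div_one_sub_mul_pos {q v : ℂ} (hq : ‖q‖ = 1) (hq_im : 0 < q.im) (hv : ‖v‖ < 1) :
    0 < ((q - v) / (1 - q * v)).im := by
  have hqv : 1 - q * v ≠ 0 := one_sub_mul_ne_zero hq.le hv
  have hq2 : q.re ^ 2 + q.im ^ 2 = 1 := by
    have := Complex.sq_norm q
    rw [hq, normSq_apply] at this
    linear_combination -this
  have hv2 : v.re ^ 2 + v.im ^ 2 < 1 := by
    have := Complex.sq_norm v ▸ pow_lt_one₀ (norm_nonneg v) hv two_ne_zero
    rw [normSq_apply] at this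
    linarith
  have hnum : (q - v).im * (1 - q * v).re - (q - v).re * (1 - q * v).im =
      q.im * (1 - (v.re ^ 2 + v.im ^ 2)) := by
    simp only [sub_re, sub_im, mul_re, mul_im, one_re, one_im]
    linear_combination v.im * hq2
  rw [div_im, ← sub_div, hnum]
  exact div_pos (mul_pos hq_im (by linarith)) (normSq_pos.mpr hqv)

lemma log_eq_of_exp_eq {w z : ℂ} (h : exp w = z) (him : |w.im - arg z| < 2 * Real.pi) :
    log z = w := by
  have hz : z ≠ 0 := h ▸ exp_ne_zero w
  obtain ⟨n, hn⟩ := exp_eq_exp_iff_exists_int.mp (h.trans (exp_log hz).symm)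
  have hn_im : w.im - arg z = n * (2 * Real.pi) := by
    rw [hn]; simp [log_im]
  have hn0 : n = 0 := by
    rw [hn_im, abs_mul, abs_of_pos Real.two_pi_pos, mul_lt_iff_lt_one_left Real.two_pi_pos] at him
    exact Int.abs_lt_one_iff.mp (by exact_mod_cast him)
  simpa [hn0] using hn.symm

lemma log2pi_eq_log {z : ℂ} (h : 0 ≤ arg z) : log2pi z = log z := by
  rw [log2pi, if_neg (not_lt.mpr h)]
  rfl

lemma abs_arg_one_sub_lt_pi_div_two {w : ℂ} (hw : ‖w‖ < 1) : |arg (1 - w)| < Real.pi / 2 := by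
  refine abs_arg_lt_pi_div_two_iff.mpr (Or.inl ?_)
  simpa using (re_le_norm w).trans_lt hw

lemma log2pi_mobius_exp {θ : ℝ} (hθ₀ : 0 < θ) (hθπ : θ < Real.pi) {v : ℂ} (hv : ‖v‖ < 1) :
    log2pi ((exp (θ * I) - v) / (1 - exp (θ * I) * v)) =
      log (1 - v * exp (-(θ * I))) - log (1 - v * exp (θ * I)) + θ * I := by
  have hq : ‖exp (θ * I)‖ = 1 := norm_exp_ofReal_mul_I θ
  have hA : ‖v * exp (-(θ * I))‖ < 1 := by
    simpa [← neg_mul, ← ofReal_neg, norm_exp_ofReal_mul_I] using hv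
  have hB : ‖v * exp (θ * I)‖ < 1 := by simpa [hq] using hv
  have hq_im : 0 < (exp (θ * I)).im := by
    rw [exp_ofReal_mul_I_im]
    exact Real.sin_pos_of_pos_of_lt_pi hθ₀ hθπ
  have hz := im_div_one_sub_mul_pos hq hq_im hv
  rw [log2pi_eq_log (arg_nonneg_iff.mpr hz.le)]
  apply log_eq_of_exp_eq
  · have hA0 := slitPlane_ne_zero (one_sub_mem_slitPlane hA)
    have hB0 := slitPlane_ne_zero (one_sub_mem_slitPlane hB)
    rw [Complex.exp_add, Complex.exp_sub, exp_log hA0, exp_log hB0, Complex.exp_neg]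
    field_simp
  · have := abs_lt.mp (abs_arg_one_sub_lt_pi_div_two hA)
    have := abs_lt.mp (abs_arg_one_sub_lt_pi_div_two hB)
    have := arg_le_pi ((exp (θ * I) - v) / (1 - exp (θ * I) * v))
    have := arg_nonneg_iff.mpr hz.le
    simp only [add_im, sub_im, log_im, mul_im, ofReal_re, ofReal_im, I_re, I_im]
    rw [abs_lt]
    constructor <;> linarith

/-- Example (explicit formula for the geodesic of the strip with boundary measure
`L` restricted to `{ζ ∈ 𝕋 : ζ̄h(ζ) > 0}`). -/
theorem strip_geodesic_formula (a : ℂ) (b : ℝ) (hab : |b| < 2 * ‖a‖)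
    (c : ℝ)
    (hc : c = -b / (2 * ‖a‖ + Real.sqrt (4 * ‖a‖ ^ 2 - b ^ 2))) :
    ∀ lam ∈ ball (0 : ℂ) 1,
      (1 / (2 * Real.pi) : ℂ) *
          ∫ θ in {θ : AddCircle (2 * Real.pi) | 0 < b + 2 * (a * conj (tCoe θ)).re},
            (tCoe θ + lam) / (tCoe θ - lam) =
        tau (Complex.I * ((((conj a / ‖a‖) * lam) - (c : ℂ)) /
          (1 - (c : ℂ) * ((conj a / ‖a‖) * lam)))) := by
  intro lam hlam
  rw [mem_ball_zero_iff] at hlam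
  have hr : 0 < ‖a‖ := by linarith [abs_nonneg b]
  have hk : -1 < -b / (2 * ‖a‖) ∧ -b / (2 * ‖a‖) < 1 := by
    rw [lt_div_iff₀ (by positivity), div_lt_one (by positivity)]
    constructor <;> linarith [abs_lt.mp hab]
  set θ₀ := Real.arccos (-b / (2 * ‖a‖)) with hθ₀
  have hθ₀_pos : 0 < θ₀ := Real.arccos_pos.mpr hk.2
  have hθ₀_lt : θ₀ < Real.pi := Real.arccos_lt_pi.mpr hk.1
  have hsin : 0 ≤ Real.sin θ₀ := Real.sin_nonneg_of_nonneg_of_le_pi hθ₀_pos.le hθ₀_lt.le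
  have hc' : c = Real.cos θ₀ / (1 + Real.sin θ₀) :=
    hc.trans (neg_div_add_sqrt_eq_cos_div_one_add_sin hr hab.le)
  rw [setIntegral_herglotz_kernel_setOf_pos (norm_pos_iff.mp hr) (le_of_abs_le hab.le) hlam hθ₀,
    tau]
  set v := conj a / ‖a‖ * lam
  have hv : ‖v‖ < 1 := by simpa [v, hr.ne'] using hlam
  have hc₁ : ‖(c : ℂ)‖ ≤ 1 := by
    rw [norm_real, Real.norm_eq_abs, hc']
    exact abs_cos_div_one_add_sin_le_one hsin
  rw [I_mul_cayley_mobius (exp_mul_I_mul_one_add_I_mul hsin hc') (one_sub_mul_ne_zero hc₁ hv)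
      (one_sub_mul_ne_zero (norm_exp_ofReal_mul_I θ₀).le hv),
    log2pi_mobius_exp hθ₀_pos hθ₀_lt hv]
  generalize log (1 - v * exp (-(θ₀ * I))) - log (1 - v * exp (θ₀ * I)) = L
  have hπ : (Real.pi : ℂ) ≠ 0 := ofReal_ne_zero.mpr Real.pi_ne_zero
  field_simp
  linear_combination θ₀ * I_sq
end

section
/- Let D ⊂ ℂⁿ be a taut convex tube domain, let φ : 𝔻 → D be a complex geodesic with holomorphic left inverse f : D → 𝔻 (f ∘ φ = id_𝔻), and let h(λ) = (∂f/∂z₁(φ(λ)),…,∂f/∂zₙ(φ(λ))) for λ ∈ 𝔻. Then for all λ ∈ 𝔻 and all z ∈ D: Re[λ̄h(λ) • (z − φ(λ))] ≤ 2(1 − |λ|) |h(0) • (z − φ(0))|. -/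
open MeasureTheory Complex Metric Set Filter ComplexConjugate

/-! By convexity of `D`, for `t ∈ [0, 1]` the maps `w ↦ f (φ w + t • (z - φ w))` are holomorphic
self-maps of the disc, equal to the identity at `t = 0`. The Schwarz–Pick inequality between `0`
and `λ` therefore holds for every `t`, with equality at `t = 0`, so its defect has nonnegative
derivative at `t = 0`. This derivative computes to
`Re (λ̄ f'(φ λ)(z - φ λ)) ≤ (1 - |λ|²) Re (λ̄ f'(φ 0)(z - φ 0))`, and
`(1 - |λ|²)|λ| ≤ 2 (1 - |λ|)`. -/

theorem ContinuousLinearMap.sum_apply_single_mul {ι R : Type*} [Fintype ι] [DecidableEq ι]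
    [CommSemiring R] [TopologicalSpace R] (L : (ι → R) →L[R] R) (w : ι → R) :
    ∑ j, L (Pi.single j 1) * w j = L w := by
  conv_rhs => rw [pi_eq_sum_univ' w, map_sum]
  simp only [map_smul, smul_eq_mul, mul_comm]

theorem Complex.norm_sub_lt_norm_one_sub_conj_mul {a x : ℂ} (ha : ‖a‖ < 1) (hx : ‖x‖ < 1) :
    ‖x - a‖ < ‖1 - conj a * x‖ := by
  have hgap : ‖1 - conj a * x‖ ^ 2 - ‖x - a‖ ^ 2 = (1 - ‖a‖ ^ 2) * (1 - ‖x‖ ^ 2) := by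
    simp only [Complex.sq_norm, Complex.normSq_apply, Complex.sub_re, Complex.sub_im,
      Complex.mul_re, Complex.mul_im, Complex.one_re, Complex.one_im, Complex.conj_re,
      Complex.conj_im]
    ring
  have hpos : 0 < (1 - ‖a‖ ^ 2) * (1 - ‖x‖ ^ 2) := by
    apply mul_pos <;> nlinarith [norm_nonneg a, norm_nonneg x]
  exact (pow_lt_pow_iff_left₀ (norm_nonneg _) (norm_nonneg _) two_ne_zero).1 (by linarith)

theorem Complex.norm_sub_apply_zero_le_of_mapsTo_ball {g : ℂ → ℂ}
    (hd : DifferentiableOn ℂ g (ball 0 1)) (hm : MapsTo g (ball 0 1) (ball 0 1)) {w : ℂ}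
    (hw : w ∈ ball 0 1) :
    ‖g w - g 0‖ ≤ ‖w‖ * ‖1 - conj (g 0) * g w‖ := by
  have hg : ∀ u ∈ ball (0 : ℂ) 1, ‖g u‖ < 1 := fun u hu => mem_ball_zero_iff.1 (hm hu)
  have hmob : ∀ u ∈ ball (0 : ℂ) 1, ‖g u - g 0‖ < ‖1 - conj (g 0) * g u‖ := fun u hu =>
    norm_sub_lt_norm_one_sub_conj_mul (hg 0 (mem_ball_self one_pos)) (hg u hu)
  have hne : ∀ u ∈ ball (0 : ℂ) 1, 1 - conj (g 0) * g u ≠ 0 := fun u hu =>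
    norm_pos_iff.1 ((norm_nonneg _).trans_lt (hmob u hu))
  set F : ℂ → ℂ := fun u => (g u - g 0) / (1 - conj (g 0) * g u)
  have hFd : DifferentiableOn ℂ F (ball 0 1) :=
    (hd.sub_const _).div ((differentiableOn_const 1).sub (hd.const_mul _)) hne
  have hFm : MapsTo F (ball 0 1) (closedBall 0 1) := fun u hu => by
    simpa [F, norm_div, div_le_one (norm_pos_iff.2 (hne u hu))] using (hmob u hu).le
  have hF := norm_le_norm_of_mapsTo_ball hFd hFm (by simp [F]) (mem_ball_zero_iff.1 hw)
  rwa [norm_div, div_le_iff₀ (norm_pos_iff.2 (hne w hw))] at hF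

theorem IsConvexTube.isOpen {n : ℕ} {D : Set (Fin n → ℂ)} {Ω : Set (Fin n → ℝ)}
    (h : IsConvexTube D Ω) : IsOpen D := by
  obtain ⟨-, hΩ, -, rfl⟩ := h
  exact hΩ.preimage (by fun_prop)

theorem IsConvexTube.convex {n : ℕ} {D : Set (Fin n → ℂ)} {Ω : Set (Fin n → ℝ)}
    (h : IsConvexTube D Ω) : Convex ℝ D := by
  obtain ⟨hΩ, -, -, rfl⟩ := h
  exact hΩ.linear_preimage (LinearMap.pi fun j => Complex.reLm.comp (LinearMap.proj j))

theorem DifferentiableAt.hasDerivAt_comp_add_smul {E F : Type*} [NormedAddCommGroup E]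
    [NormedSpace ℂ E] [NormedAddCommGroup F] [NormedSpace ℂ F] {f : E → F} {w : E}
    (hf : DifferentiableAt ℂ f w) (v : E) :
    HasDerivAt (fun t : ℝ => f (w + t • v)) (fderiv ℂ f w v) 0 := by
  have hline : HasDerivAt (fun t : ℝ => w + t • v) v 0 := by
    simpa using ((hasDerivAt_id (0 : ℝ)).smul_const v).const_add w
  exact (hf.hasFDerivAt.restrictScalars ℝ).comp_hasDerivAt_of_eq 0 hline (by simp)

theorem HasDerivAt.nonneg_of_isMinOn_Icc {B : ℝ → ℝ} {d : ℝ} (hB : HasDerivAt B d 0)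
    (hmin : IsMinOn B (Icc 0 1) 0) : 0 ≤ d := by
  have hcone : (1 : ℝ) ∈ posTangentConeAt (Icc (0 : ℝ) 1) 0 :=
    mem_posTangentConeAt_of_segment_subset (by simp [segment_eq_Icc])
  simpa using hmin.localize.hasFDerivWithinAt_nonneg hB.hasFDerivAt.hasFDerivWithinAt hcone

section Geodesic

variable {E : Type*} [NormedAddCommGroup E] [NormedSpace ℂ E] {D : Set E} {φ : ℂ → E}
  {f : E → ℂ}

theorem Convex.norm_sub_le_along_homotopy (hD : Convex ℝ D)
    (hφ : DifferentiableOn ℂ φ (ball 0 1)) (hφD : MapsTo φ (ball 0 1) D)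
    (hf : DifferentiableOn ℂ f D) (hfD : MapsTo f D (ball 0 1)) {lam : ℂ}
    (hlam : lam ∈ ball 0 1) {z : E} (hz : z ∈ D) {t : ℝ} (ht : t ∈ Icc (0 : ℝ) 1) :
    ‖f (φ lam + t • (z - φ lam)) - f (φ 0 + t • (z - φ 0))‖ ≤
      ‖lam‖ * ‖1 - conj (f (φ 0 + t • (z - φ 0))) * f (φ lam + t • (z - φ lam))‖ := by
  have hmaps : MapsTo (fun w => φ w + t • (z - φ w)) (ball 0 1) D := fun w hw =>
    hD.add_smul_sub_mem (hφD hw) hz ht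
  exact Complex.norm_sub_apply_zero_le_of_mapsTo_ball
    (hf.comp (hφ.add (((differentiableOn_const z).sub hφ).const_smul t)) hmaps)
    (hfD.comp hmaps) hlam

theorem Convex.re_conj_mul_fderiv_le (hD : Convex ℝ D) (hDo : IsOpen D)
    (hφ : DifferentiableOn ℂ φ (ball 0 1)) (hφD : MapsTo φ (ball 0 1) D)
    (hf : DifferentiableOn ℂ f D) (hfD : MapsTo f D (ball 0 1))
    (hleft : ∀ lam ∈ ball (0 : ℂ) 1, f (φ lam) = lam) {lam : ℂ} (hlam : lam ∈ ball 0 1)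
    {z : E} (hz : z ∈ D) :
    (conj lam * fderiv ℂ f (φ lam) (z - φ lam)).re ≤
      (1 - ‖lam‖ ^ 2) * (conj lam * fderiv ℂ f (φ 0) (z - φ 0)).re := by
  have h0 : (0 : ℂ) ∈ ball (0 : ℂ) 1 := mem_ball_self one_pos
  set a : ℝ → ℂ := fun t => f (φ 0 + t • (z - φ 0))
  set b : ℝ → ℂ := fun t => f (φ lam + t • (z - φ lam))
  set u₀ := fderiv ℂ f (φ 0) (z - φ 0)
  set u := fderiv ℂ f (φ lam) (z - φ lam)
  have ha : HasDerivAt a u₀ 0 :=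
    (hf.differentiableAt (hDo.mem_nhds (hφD h0))).hasDerivAt_comp_add_smul _
  have hb : HasDerivAt b u 0 :=
    (hf.differentiableAt (hDo.mem_nhds (hφD hlam))).hasDerivAt_comp_add_smul _
  have ha0 : a 0 = 0 := by simp [a, hleft 0 h0]
  have hb0 : b 0 = lam := by simp [b, hleft lam hlam]
  set B : ℝ → ℝ := fun t => ‖lam‖ ^ 2 * ‖1 - conj (a t) * b t‖ ^ 2 - ‖b t - a t‖ ^ 2
  have hB := ((((ha.star.mul hb).const_sub 1).norm_sq).const_mul (‖lam‖ ^ 2)).sub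
    (hb.sub ha).norm_sq
  have hmin : IsMinOn B (Icc 0 1) 0 := fun t ht => by
    have hSP := hD.norm_sub_le_along_homotopy hφ hφD hf hfD hlam hz ht
    simp only [Set.mem_ofPred_eq, B, ha0, hb0, map_zero, zero_mul, sub_zero, norm_one]
    nlinarith [norm_nonneg (b t - a t), norm_nonneg lam, norm_nonneg (1 - conj (a t) * b t)]
  have hd := hB.nonneg_of_isMinOn_Icc hmin
  have hre₀ : (-(star u₀ * b 0 + star (a 0) * u) * conj (1 - star (a 0) * b 0)).re =
      -(conj lam * u₀).re := by
    rw [ha0, hb0, star_zero, zero_mul, add_zero, zero_mul, sub_zero, map_one, mul_one, neg_re,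
      ← Complex.conj_re, map_mul, Complex.star_def, Complex.conj_conj, mul_comm]
  have hre : ((u - u₀) * conj (b 0 - a 0)).re = (conj lam * u).re - (conj lam * u₀).re := by
    rw [ha0, hb0, sub_zero, mul_comm, mul_sub, sub_re]
  simp only [Complex.inner, Pi.mul_apply, Pi.sub_apply, hre₀, hre] at hd
  linarith

end Geodesic

theorem geodesic_derivative_inequality_general {n : ℕ}
    (D : Set (Fin n → ℂ)) (Ω : Set (Fin n → ℝ))
    (hTube : IsConvexTube D Ω)
    (φ : ℂ → Fin n → ℂ) (hφ : DifferentiableOn ℂ φ (ball 0 1))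
    (hφD : MapsTo φ (ball 0 1) D)
    (f : (Fin n → ℂ) → ℂ) (hf : DifferentiableOn ℂ f D)
    (hfD : MapsTo f D (ball 0 1))
    (hleft : ∀ lam ∈ ball (0 : ℂ) 1, f (φ lam) = lam) :
    ∀ lam ∈ ball (0 : ℂ) 1, ∀ z ∈ D,
      (∑ j, conj lam * fderiv ℂ f (φ lam) (Pi.single j 1) * (z j - φ lam j)).re ≤
        2 * (1 - ‖lam‖) *
          ‖∑ j, fderiv ℂ f (φ 0) (Pi.single j 1) * (z j - φ 0 j)‖ := by
  intro lam hlam z hz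
  have hsum (L : (Fin n → ℂ) →L[ℂ] ℂ) (w : Fin n → ℂ) :
      ∑ j, L (Pi.single j 1) * (z j - w j) = L (z - w) :=
    L.sum_apply_single_mul (z - w)
  simp_rw [mul_assoc, ← Finset.mul_sum, hsum]
  set u₀ := fderiv ℂ f (φ 0) (z - φ 0)
  have hs : ‖lam‖ < 1 := mem_ball_zero_iff.1 hlam
  calc (conj lam * fderiv ℂ f (φ lam) (z - φ lam)).re
      ≤ (1 - ‖lam‖ ^ 2) * (conj lam * u₀).re :=
        hTube.convex.re_conj_mul_fderiv_le hTube.isOpen hφ hφD hf hfD hleft hlam hz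
    _ ≤ (1 - ‖lam‖ ^ 2) * (‖lam‖ * ‖u₀‖) := by
        gcongr
        · nlinarith [norm_nonneg lam]
        · simpa using re_le_norm (conj lam * u₀)
    _ ≤ 2 * ((1 - ‖lam‖) * ‖u₀‖) := by
        have hs' : ‖lam‖ * (1 + ‖lam‖) ≤ 2 := by nlinarith [norm_nonneg lam]
        nlinarith [mul_nonneg (mul_nonneg (sub_nonneg.2 hs.le) (norm_nonneg u₀))
          (sub_nonneg.2 hs')]

/-- The key inequality from the proof of the necessity proposition:
`Re[λ̄h(λ) • (z − φ(λ))] ≤ 2(1 − |λ|)|h(0) • (z − φ(0))|` for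
`h(λ) = (∂f/∂z₁(φ(λ)),…,∂f/∂zₙ(φ(λ)))`, `f` a holomorphic left inverse of `φ`. -/
theorem geodesic_derivative_inequality {n : ℕ}
    (D : Set (Fin n → ℂ)) (Ω : Set (Fin n → ℝ))
    (hTube : IsConvexTube D Ω) (hTaut : NoLine Ω)
    (φ : ℂ → Fin n → ℂ) (hφ : DifferentiableOn ℂ φ (ball 0 1))
    (hφD : MapsTo φ (ball 0 1) D)
    (f : (Fin n → ℂ) → ℂ) (hf : DifferentiableOn ℂ f D)
    (hfD : MapsTo f D (ball 0 1))
    (hleft : ∀ lam ∈ ball (0 : ℂ) 1, f (φ lam) = lam) :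
    ∀ lam ∈ ball (0 : ℂ) 1, ∀ z ∈ D,
      (∑ j, conj lam * fderiv ℂ f (φ lam) (Pi.single j 1) * (z j - φ lam j)).re ≤
        2 * (1 - ‖lam‖) *
          ‖∑ j, fderiv ℂ f (φ 0) (Pi.single j 1) * (z j - φ 0 j)‖ :=
  geodesic_derivative_inequality_general D Ω hTube φ hφ hφD f hf hfD hleft
end
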